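/- arXiv:2208.09155 — 5 statements merged into one kernel-verified Lean document; each statement's English description precedes it below -/
import Mathlib

section
/- For every nonzero element (i₀,j₀,[0;k₀]) of B_ω^{F_n}, both the up-set {x : (i₀,j₀,[0;k₀]) ≼ x} and the down-set {x : x ≼ (i₀,j₀,[0;k₀])} with respect to the natural partial order are finite sets. -/
abbrev B (n : ℕ) : Type := Option (ℕ × ℕ × Fin (n + 1))

/-- Multiplication of the semigroup `B_ω^{F_n}`: triples `(i,j,[0;k])` plus an absorbing
zero (`none`), with the bicyclic-extension multiplication. -/
def Bmul (n : ℕ) : B n → B n → B n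
  | some (i1, j1, k1), some (i2, j2, k2) =>
    if j1 ≤ i2 then
      if i2 ≤ j1 + k1.val then
        some (i1 - j1 + i2, j2, ⟨min (j1 + k1.val - i2) k2.val,
          lt_of_le_of_lt (min_le_right _ _) k2.isLt⟩)
      else none
    else
      if j1 ≤ i2 + k2.val then
        some (i1, j1 - i2 + j2, ⟨min k1.val (i2 + k2.val - j1),
          lt_of_le_of_lt (min_le_left _ _) k1.isLt⟩)
      else none
  | _, _ => none

/-- The natural partial order on the inverse semigroup :
 iff  for some idempotent . -/
def nle (n : ℕ) (a b : B n) : Prop := ∃ e : B n, Bmul n e e = e ∧ a = Bmul n b e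

lemma idem_eq (n d e2 : ℕ) (f : Fin (n+1))
    (h : Bmul n (some (d, e2, f)) (some (d, e2, f)) = some (d, e2, f)) : e2 = d := by
  simp only [Bmul] at h
  split_ifs at h <;> simp_all <;> omega

lemma finite_bounded (n N : ℕ) :
    {x : B n | x = none ∨ ∃ a b : ℕ, ∃ c : Fin (n+1), a ≤ N ∧ b ≤ N ∧ x = some (a, b, c)}.Finite := by
  have : {x : B n | x = none ∨ ∃ a b : ℕ, ∃ c : Fin (n+1), a ≤ N ∧ b ≤ N ∧ x = some (a, b, c)} ⊆
      Set.range (fun p : Fin (N+1) × Fin (N+1) × Fin (n+1) =>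
        (some (p.1.val, p.2.1.val, p.2.2) : B n)) ∪ {none} := by
    rintro x (rfl | ⟨a, b, c, ha, hb, rfl⟩)
    · exact Or.inr rfl
    · exact Or.inl ⟨(⟨a, by omega⟩, ⟨b, by omega⟩, c), rfl⟩
  exact Set.Finite.subset ((Set.finite_range _).union (Set.finite_singleton none)) this

theorem upset_downset_finite (n : ℕ) (i j : ℕ) (k : Fin (n + 1)) :
    {x : B n | nle n (some (i, j, k)) x}.Finite ∧
    {x : B n | nle n x (some (i, j, k))}.Finite := by
  constructor
  · apply (finite_bounded n (i + j + n)).subset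
    rintro x ⟨e, he, hx⟩
    cases x with
    | none => exact Or.inl rfl
    | some p =>
      obtain ⟨a, b, c⟩ := p
      cases e with
      | none => simp [Bmul] at hx
      | some q =>
        obtain ⟨d, e2, f⟩ := q
        have hde : e2 = d := idem_eq n d e2 f he
        subst hde
        refine Or.inr ⟨a, b, c, ?_, ?_, rfl⟩ <;>
        · simp only [Bmul] at hx
          split_ifs at hx with h1 h2 h2 <;> simp_all <;> omega
  · apply (finite_bounded n (i + j + n)).subset
    rintro x ⟨e, he, hx⟩
    cases x with
    | none => exact Or.inl rfl
    | some p =>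
      obtain ⟨a, b, c⟩ := p
      cases e with
      | none => simp [Bmul] at hx
      | some q =>
        obtain ⟨d, e2, f⟩ := q
        have hde : e2 = d := idem_eq n d e2 f he
        subst hde
        refine Or.inr ⟨a, b, c, ?_, ?_, rfl⟩ <;>
        · simp only [Bmul] at hx
          split_ifs at hx with h1 h2 h2 <;> simp_all <;> omega
end

section
/- For any elements α, β of B_ω^{F_n}, the set α · B_ω^{F_n} · β = {α·x·β : x ∈ B_ω^{F_n}} is finite. -/
lemma Bmul_some_some (n : ℕ) (i1 j1 i2 j2 : ℕ) (k1 k2 : Fin (n+1)) :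
    Bmul n (some (i1, j1, k1)) (some (i2, j2, k2)) =
    if j1 ≤ i2 then
      if i2 ≤ j1 + k1.val then
        some (i1 - j1 + i2, j2, ⟨min (j1 + k1.val - i2) k2.val,
          lt_of_le_of_lt (min_le_right _ _) k2.isLt⟩)
      else none
    else
      if j1 ≤ i2 + k2.val then
        some (i1, j1 - i2 + j2, ⟨min k1.val (i2 + k2.val - j1),
          lt_of_le_of_lt (min_le_left _ _) k1.isLt⟩)
      else none := rfl

lemma Bmul_none_left (n : ℕ) (x : B n) : Bmul n none x = none := by
  cases x <;> rfl

lemma Bmul_none_right (n : ℕ) (x : B n) : Bmul n x none = none := by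
  cases x <;> rfl

theorem sandwich_finite (n : ℕ) (a b : B n) :
    {y : B n | ∃ x : B n, y = Bmul n (Bmul n a x) b}.Finite := by
  match a, b with
  | none, b =>
      apply Set.Finite.subset (Set.finite_singleton (none : B n))
      rintro y ⟨x, rfl⟩
      simp [Bmul_none_left]
  | some (ia, ja, ka), none =>
      apply Set.Finite.subset (Set.finite_singleton (none : B n))
      rintro y ⟨x, rfl⟩
      simp [Bmul_none_right]
  | some (ia, ja, ka), some (ib, jb, kb) =>
      apply Set.Finite.subset
        (Set.Finite.insert (none : B n)
          (((Set.finite_Iic (ia + ja + ka.val + ib)).prod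
            ((Set.finite_Iic (jb + kb.val)).prod
              (Set.finite_univ (α := Fin (n+1))))).image some))
      rintro y ⟨x, rfl⟩
      match x with
      | none => simp [Bmul_none_right, Bmul_none_left]
      | some (i, j, k) =>
          rw [Bmul_some_some]
          split_ifs <;>
            first
              | exact Set.mem_insert _ _
              | (rw [Bmul_some_some]; split_ifs <;>
                  first
                    | exact Set.mem_insert _ _
                    | (refine Set.mem_insert_iff.mpr (Or.inr ⟨_, ⟨?_, ?_, Set.mem_univ _⟩, rfl⟩) <;>
                        simp only [Set.mem_Iic, Fin.val_mk] at * <;> omega))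
end

section
/- For any nonzero elements a, b of B_ω^{F_n}, the set of solutions x of the equation a·x = b is finite, and likewise the set of solutions of x·a = b is finite. -/
lemma bounded_finite (n N : ℕ) :
    {x : B n | ∀ p : ℕ × ℕ × Fin (n + 1), x = some p → p.1 ≤ N ∧ p.2.1 ≤ N}.Finite := by
  apply Set.Finite.subset
    (Set.Finite.insert (none : B n)
      (Set.Finite.image some
        ((Set.finite_Iic N).prod ((Set.finite_Iic N).prod Set.finite_univ))))
  intro x hx
  match x with
  | none => exact Set.mem_insert _ _
  | some p =>
    right
    exact ⟨p, ⟨(hx p rfl).1, (hx p rfl).2, Set.mem_univ _⟩, rfl⟩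

theorem solutions_finite (n : ℕ) (a b : B n) (ha : a ≠ none) (hb : b ≠ none) :
    {x : B n | Bmul n a x = b}.Finite ∧ {x : B n | Bmul n x a = b}.Finite := by
  obtain ⟨⟨i1, j1, k1⟩, rfl⟩ := Option.ne_none_iff_exists'.mp ha
  obtain ⟨⟨bi, bj, bk⟩, rfl⟩ := Option.ne_none_iff_exists'.mp hb
  set N := i1 + j1 + bi + bj + n with hN
  have hk1 := k1.isLt
  constructor
  · apply (bounded_finite n N).subset
    rintro x hx ⟨i2, j2, k2⟩ rfl
    have hk2 := k2.isLt
    simp only [Set.mem_setOf_eq, Bmul] at hx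
    split_ifs at hx with h1 h2 h3 <;>
      simp only [Option.some.injEq, Prod.mk.injEq] at hx <;> (dsimp only; omega)
  · apply (bounded_finite n N).subset
    rintro x hx ⟨i2, j2, k2⟩ rfl
    have hk2 := k2.isLt
    simp only [Set.mem_setOf_eq, Bmul] at hx
    split_ifs at hx with h1 h2 h3 <;>
      simp only [Option.some.injEq, Prod.mk.injEq] at hx <;> (dsimp only; omega)
end

section
/- For each p ∈ {0,1,…,n−1}, the map h_p: B_ω^{F_n} → B_ω^{F_n} defined by h_p(0) = 0, h_p(i,j,[0;k]) = 0 for k ≤ p, and h_p(i,j,[0;k]) = (i,j,[0;k−p−1]) for p+1 ≤ k ≤ n, is a semigroup homomorphism, and its image is the subsemigroup B_ω^{F_{n−p−1}}. -/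
/-- The homomorphism `h_p`. -/
def hmap (n p : ℕ) : B n → B n
  | none => none
  | some (i, j, k) =>
      if k.val ≤ p then none
      else some (i, j, ⟨k.val - (p + 1), lt_of_le_of_lt (Nat.sub_le _ _) k.isLt⟩)

/-- Membership in the ideal `B_ω^{F_k}` inside `B_ω^{F_n}`. -/
def inIdeal (n k : ℕ) (a : B n) : Prop :=
  a = none ∨ ∃ (i j : ℕ) (m : Fin (n + 1)), m.val ≤ k ∧ a = some (i, j, m)

theorem hmap_hom_image (n p : ℕ) (hp : p < n) :
    (∀ a b : B n, hmap n p (Bmul n a b) = Bmul n (hmap n p a) (hmap n p b)) ∧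
    Set.range (hmap n p) = {a : B n | inIdeal n (n - p - 1) a} := by
  constructor
  · rintro (_ | ⟨i1, j1, k1⟩) (_ | ⟨i2, j2, k2⟩) <;>
      simp only [Bmul, hmap] <;>
      split_ifs <;>
      simp only [Bmul, hmap] <;>
      split_ifs <;>
      first
        | rfl
        | omega
        | (simp only [Option.some.injEq, Prod.mk.injEq, Fin.mk.injEq, Fin.val_mk, true_and,
            reduceCtorEq]; omega)
  · ext a
    simp only [Set.mem_range, Set.mem_setOf_eq, inIdeal]
    constructor
    · rintro ⟨x, rfl⟩
      rcases x with _ | ⟨i, j, k⟩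
      · exact Or.inl rfl
      · simp only [hmap]
        split_ifs with h
        · exact Or.inl rfl
        · exact Or.inr ⟨i, j, _, by simp only [Fin.val_mk]; omega, rfl⟩
    · rintro (rfl | ⟨i, j, m, hm, rfl⟩)
      · exact ⟨none, rfl⟩
      · refine ⟨some (i, j, ⟨m.val + p + 1, by omega⟩), ?_⟩
        simp only [hmap]
        rw [if_neg (by omega)]
        simp only [Option.some.injEq, Prod.mk.injEq]
        exact ⟨trivial, trivial, Fin.ext (by simp only [Fin.val_mk]; omega)⟩
end

section
/- Let τ be a T₁ topology on B_ω^{F_n} making it a semitopological semigroup (all left and right translations continuous). Then every nonzero element of B_ω^{F_n} is an isolated point of (B_ω^{F_n}, τ). -/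
open Set

theorem isOpen_preimage_singleton_of_finite_range {X Y : Type*} [TopologicalSpace X]
    [TopologicalSpace Y] [T1Space Y] {f : X → Y} (hf : Continuous f) (hfin : (range f).Finite)
    (y : Y) : IsOpen (f ⁻¹' {y}) := by
  have hfiber : f ⁻¹' {y} = f ⁻¹' (range f \ {y})ᶜ := by
    ext x
    simp
  rw [hfiber]
  exact (hfin.sdiff.isClosed.isOpen_compl).preimage hf

namespace Bmul

variable {n : ℕ}

@[simp]
theorem none_left (x : B n) : Bmul n none x = none := by
  cases x <;> rfl

@[simp]
theorem none_right (x : B n) : Bmul n x none = none := by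
  cases x <;> rfl

theorem le_add_of_ne_none {i₁ j₁ i₂ j₂ : ℕ} {k₁ k₂ : Fin (n + 1)}
    (h : Bmul n (some (i₁, j₁, k₁)) (some (i₂, j₂, k₂)) ≠ none) :
    i₂ ≤ j₁ + n ∧ j₁ ≤ i₂ + n := by
  have := k₁.isLt
  have := k₂.isLt
  simp only [Bmul] at h
  split_ifs at h <;> first | exact absurd rfl h | omega

theorem coord_bounds_of_eq_some {i₁ j₁ i₂ j₂ p q : ℕ} {k₁ k₂ m : Fin (n + 1)}
    (h : Bmul n (some (i₁, j₁, k₁)) (some (i₂, j₂, k₂)) = some (p, q, m)) :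
    p ≤ max i₁ j₁ + n ∧ p ≤ i₁ + i₂ ∧ j₂ ≤ q ∧ q ≤ j₂ + n := by
  have := k₁.isLt
  have := k₂.isLt
  simp only [Bmul] at h
  split_ifs at h <;> simp only [Option.some.injEq, Prod.mk.injEq] at h <;> omega

def box (n N M : ℕ) : Set (B n) :=
  {x | ∀ t ∈ x, t.1 ≤ N ∧ t.2.1 ≤ M}

theorem finite_box (N M : ℕ) : (box n N M).Finite := by
  refine ((((finite_Iic N).prod ((finite_Iic M).prod finite_univ)).image some).insert none).subset
    ?_
  rintro (_ | ⟨p, q, m⟩) hx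
  · exact mem_insert _ _
  · obtain ⟨hp, hq⟩ := hx _ rfl
    exact mem_insert_of_mem _ ⟨(p, q, m), ⟨hp, hq, trivial⟩, rfl⟩

def sandwich (i j : ℕ) (k : Fin (n + 1)) (x : B n) : B n :=
  Bmul n (Bmul n (some (i, i, k)) x) (some (j, j, k))

variable (i j : ℕ) (k : Fin (n + 1))

/- Since `i - j + j` truncates, `sandwich i j k (some (i, j, k))` is `(max i j, j, [0;k])`, not
`(i, j, [0;k])`; nonzero is all that is needed. -/
theorem sandwich_ne_none : sandwich i j k (some (i, j, k)) ≠ none := by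
  simp [sandwich, Bmul]

theorem continuous_sandwich [TopologicalSpace (B n)]
    (hl : ∀ a : B n, Continuous (fun x => Bmul n a x))
    (hr : ∀ a : B n, Continuous (fun x => Bmul n x a)) :
    Continuous (sandwich i j k) :=
  (hr _).comp (hl _)

theorem sandwich_mem_box (x : B n) : sandwich i j k x ∈ box n (i + j + n) (j + n) := by
  rintro ⟨p, q, m⟩ hx
  obtain ⟨⟨p', q', m'⟩, hy⟩ := Option.ne_none_iff_exists'.mp
    fun h : Bmul n (some (i, i, k)) x = none => by simp [sandwich, h] at hx
  obtain ⟨⟨a, b, c⟩, rfl⟩ := Option.ne_none_iff_exists'.mp fun h : x = none => by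
    simp [h] at hy
  obtain ⟨hp', -⟩ := coord_bounds_of_eq_some hy
  obtain ⟨-, hp, -, hq⟩ := coord_bounds_of_eq_some
    (show Bmul n (some (p', q', m')) (some (j, j, k)) = some (p, q, m) by
      rw [← hy]; exact Option.mem_def.mp hx)
  exact ⟨by simp only [max_self] at hp' ⊢; omega, hq⟩

theorem range_sandwich_finite : (range (sandwich i j k)).Finite :=
  (finite_box _ _).subset (range_subset_iff.mpr (sandwich_mem_box i j k))

theorem sandwich_fiber_finite (c : ℕ × ℕ × Fin (n + 1)) :
    (sandwich i j k ⁻¹' {some c}).Finite := by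
  refine (finite_box (n := n) (i + n) (j + n)).subset ?_
  rintro x hx ⟨a, b, m⟩ rfl
  obtain ⟨⟨p', q', m'⟩, hy⟩ := Option.ne_none_iff_exists'.mp
    fun h : Bmul n (some (i, i, k)) (some (a, b, m)) = none => by simp [sandwich, h] at hx
  obtain ⟨ha, -⟩ := le_add_of_ne_none (hy ▸ Option.some_ne_none _)
  obtain ⟨-, -, hbq', -⟩ := coord_bounds_of_eq_some hy
  obtain ⟨-, hq'⟩ := le_add_of_ne_none
    (show Bmul n (some (p', q', m')) (some (j, j, k)) ≠ none by
      rw [← hy]; exact fun h => by simp [sandwich, h] at hx)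
  exact ⟨ha, by simp only at hbq' hq' ⊢; omega⟩

end Bmul

theorem nonzero_isolated (n : ℕ) [TopologicalSpace (B n)] [T1Space (B n)]
    (hl : ∀ a : B n, Continuous (fun x => Bmul n a x))
    (hr : ∀ a : B n, Continuous (fun x => Bmul n x a)) :
    ∀ a : B n, a ≠ none → IsOpen ({a} : Set (B n)) := by
  rintro a ha
  obtain ⟨⟨i, j, k⟩, rfl⟩ := Option.ne_none_iff_exists'.mp ha
  obtain ⟨c, hc⟩ := Option.ne_none_iff_exists'.mp (Bmul.sandwich_ne_none i j k)
  have hopen := isOpen_preimage_singleton_of_finite_range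
    (Bmul.continuous_sandwich i j k hl hr) (Bmul.range_sandwich_finite i j k) (some c)
  exact isOpen_singleton_of_finite_mem_nhds _ (hopen.mem_nhds hc)
    (Bmul.sandwich_fiber_finite i j k c)
end
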